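/- Let X be a subshift over an alphabet 𝒜 and let α, β ∈ L_X be such that αβ⁻¹ is in reduced form in the free group on 𝒜. Then the map φ̂_{αβ⁻¹} defined by φ̂_{αβ⁻¹}(ξ) = {A ∈ 𝒰 : r(B,β) ⊆ r(A,α) for some B ∈ ξ} is a homeomorphism of O_{C(α,β)} onto O_{C(β,α)}. -/
import Mathlib


open Set

section Subshift

variable {A : Type*}

/-- The word `w` occurs as a block of `x` at position `i`. -/
def IsBlockAt (x : ℕ → A) (w : List A) (i : ℕ) : Prop :=
  ∀ j, ∀ _ : j < w.length, x (i + j) = w[j]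

/-- The subshift `X_F ⊆ 𝒜^ℕ` determined by the set `F` of forbidden words. -/
def SubshiftOf (F : Set (List A)) : Set (ℕ → A) :=
  {x | ∀ w ∈ F, ∀ i, ¬ IsBlockAt x w i}

/-- The language of the subshift: all finite words occurring in some element of `X_F`. -/
def Lang (F : Set (List A)) : Set (List A) :=
  {w | ∃ x ∈ SubshiftOf F, ∃ i, IsBlockAt x w i}

/-- Concatenation of a finite word with an infinite sequence. -/
def wcat (w : List A) (x : ℕ → A) : ℕ → A := fun n =>
  if h : n < w.length then w[n] else x (n - w.length)

/-- `C(α,β) = {β x ∈ X : α x ∈ X}`. -/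
def Cset (F : Set (List A)) (α β : List A) : Set (ℕ → A) :=
  {y | ∃ x : ℕ → A, y = wcat β x ∧ wcat β x ∈ SubshiftOf F ∧ wcat α x ∈ SubshiftOf F}

/-- The cylinder set `Z_β = C(ω,β)`. -/
def Zcyl (F : Set (List A)) (β : List A) : Set (ℕ → A) := Cset F [] β

/-- The follower set `F_α = C(α,ω)`. -/
def Fol (F : Set (List A)) (α : List A) : Set (ℕ → A) := Cset F α []

/-- The relative range `r(S,w) = {x ∈ X : w x ∈ S}`. -/
def relRange (F : Set (List A)) (S : Set (ℕ → A)) (w : List A) : Set (ℕ → A) :=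
  {x | x ∈ SubshiftOf F ∧ wcat w x ∈ S}

/-- Membership in the Boolean algebra `𝒰` of subsets of `X` generated by the sets
`C(α,β)`, `α, β ∈ L_X`: closed under finite unions, finite intersections and
complements in `X`. -/
inductive InU (F : Set (List A)) : Set (ℕ → A) → Prop
  | base {α β : List A} (hα : α ∈ Lang F) (hβ : β ∈ Lang F) : InU F (Cset F α β)
  | union {S T : Set (ℕ → A)} : InU F S → InU F T → InU F (S ∪ T)
  | inter {S T : Set (ℕ → A)} : InU F S → InU F T → InU F (S ∩ T)
  | compl {S : Set (ℕ → A)} : InU F S → InU F (SubshiftOf F \ S)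

/-- `αβ⁻¹` is in reduced form in the free group on the alphabet:
`α` and `β` do not end in the same letter. -/
def ReducedPair (α β : List A) : Prop :=
  ¬ ∃ c : A, α.getLast? = some c ∧ β.getLast? = some c

/-- Ultrafilters (= prime filters) of the Boolean algebra `𝒰`. -/
structure UltraU (F : Set (List A)) where
  sets : Set (Set (ℕ → A))
  mem_inU : ∀ S ∈ sets, InU F S
  nonempty : sets.Nonempty
  empty_not_mem : ∅ ∉ sets
  inter_mem : ∀ S ∈ sets, ∀ T ∈ sets, S ∩ T ∈ sets
  superset_mem : ∀ S ∈ sets, ∀ T : Set (ℕ → A), InU F T → S ⊆ T → T ∈ sets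
  prime : ∀ S T : Set (ℕ → A), InU F S → InU F T → S ∪ T ∈ sets → S ∈ sets ∨ T ∈ sets

/-- The basic (compact) open set `O_S = {ξ ∈ 𝒰̂ : S ∈ ξ}` of the Stone dual `𝒰̂`. -/
def Oset (F : Set (List A)) (S : Set (ℕ → A)) : Set (UltraU F) := {ξ | S ∈ ξ.sets}

/-- The Stone topology on `𝒰̂`. -/
instance (F : Set (List A)) : TopologicalSpace (UltraU F) :=
  TopologicalSpace.generateFrom {V | ∃ S : Set (ℕ → A), InU F S ∧ V = Oset F S}

/-- The graph of the partially defined map `σ̂` on `𝒰̂`: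
`sigmaHatRel F ξ η` holds iff `ξ ∈ dom σ̂` and `η = σ̂(ξ)`. -/
def sigmaHatRel (F : Set (List A)) (ξ η : UltraU F) : Prop :=
  ∃ a : A, Zcyl F [a] ∈ ξ.sets ∧
    η.sets = {B : Set (ℕ → A) | InU F B ∧ ∃ S ∈ ξ.sets, relRange F S [a] ⊆ B}

/- The OTW subshift, modelled inside `ℕ → Option A`; a finite word corresponds to a
sequence that is eventually `none` (`none` playing the role of the symbol `∞`). -/

/-- The shift map, deleting the first letter (it sends sequences of length `≤ 1`
to the empty sequence). -/
def shiftO (y : ℕ → Option A) : ℕ → Option A := fun i => y (i + 1)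

/-- An infinite sequence, as an element of the OTW model. -/
def ofSeq (x : ℕ → A) : ℕ → Option A := fun i => some (x i)

/-- A finite word, as an element of the OTW model. -/
def ofWord (w : List A) : ℕ → Option A := fun i =>
  if h : i < w.length then some w[i] else none

/-- Concatenation of a finite word with an element of the OTW model. -/
def wcatO (w : List A) (y : ℕ → Option A) : ℕ → Option A := fun n =>
  if h : n < w.length then some w[n] else y (n - w.length)

/-- The finite words belonging to `X^fin`: those `w` for which there are infinitely many
letters `a` such that `w a y ∈ X^inf` for some `y`. -/
def XFin (F : Set (List A)) : Set (List A) :=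
  {w | {a : A | ∃ y : ℕ → A, wcat (w ++ [a]) y ∈ SubshiftOf F}.Infinite}

/-- The OTW subshift `X^OTW = X^inf ∪ X^fin`. -/
def OTW (F : Set (List A)) : Set (ℕ → Option A) :=
  ofSeq '' SubshiftOf F ∪ ofWord '' XFin F

theorem ofSeq_mem_OTW {F : Set (List A)} {x : ℕ → A} (hx : x ∈ SubshiftOf F) :
    ofSeq x ∈ OTW F := Or.inl ⟨x, hx, rfl⟩

theorem ofWord_mem_OTW {F : Set (List A)} {w : List A} (hw : w ∈ XFin F) :
    ofWord w ∈ OTW F := Or.inr ⟨w, hw, rfl⟩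

/-- The generalised cylinder `𝒵(w,F') = {y ∈ X^OTW : y` begins with `w`, and the next
letter of `y` is not in `F'}`. -/
def genCyl (F : Set (List A)) (w : List A) (F' : Set A) : Set (ℕ → Option A) :=
  {y | y ∈ OTW F ∧ (∀ j, ∀ _ : j < w.length, y j = some w[j]) ∧
    ∀ a ∈ F', y w.length ≠ some a}

/-- The follower set `ℱ(w) = {y ∈ X^OTW : w y ∈ X^OTW}` in the OTW subshift. -/
def folO (F : Set (List A)) (w : List A) : Set (ℕ → Option A) :=
  {y | y ∈ OTW F ∧ wcatO w y ∈ OTW F}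

/-- The topology on `X^OTW`, generated by the generalised cylinders. -/
instance (F : Set (List A)) : TopologicalSpace ↥(OTW F) :=
  TopologicalSpace.generateFrom
    {V | ∃ w ∈ Lang F, ∃ F' : Set A, F'.Finite ∧
      V = {y : ↥(OTW F) | (y : ℕ → Option A) ∈ genCyl F w F'}}

/-- The graph of the map `π : 𝒰̂ → X^OTW`: `piRel F ξ y` holds iff `π(ξ) = y`.
(`y` begins with a nonempty word `w` iff `Z_w ∈ ξ`.) -/
def piRel (F : Set (List A)) (ξ : UltraU F) (y : ℕ → Option A) : Prop :=
  (∀ i, y i = none → y (i + 1) = none) ∧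
  ∀ w : List A, w ≠ [] →
    ((∀ j, ∀ _ : j < w.length, y j = some w[j]) ↔ Zcyl F w ∈ ξ.sets)

end Subshift

section Conjugacy

variable {A₁ A₂ : Type*}

/-- `h` commutes with the shift maps. -/
def ShiftCommuting (F₁ : Set (List A₁)) (F₂ : Set (List A₂))
    (h : ↥(OTW F₁) → ↥(OTW F₂)) : Prop :=
  ∀ (y : ↥(OTW F₁)) (hy : shiftO (y : ℕ → Option A₁) ∈ OTW F₁),
    (h ⟨shiftO (y : ℕ → Option A₁), hy⟩ : ℕ → Option A₂) =
      shiftO ((h y : ℕ → Option A₂))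

/-- `h` is length-preserving: `h y` and `y` have the same length, i.e. the same
positions where the symbol `∞` (here `none`) occurs. -/
def LengthPreserving (F₁ : Set (List A₁)) (F₂ : Set (List A₂))
    (h : ↥(OTW F₁) → ↥(OTW F₂)) : Prop :=
  ∀ (y : ↥(OTW F₁)) (i : ℕ),
    ((h y : ℕ → Option A₂) i = none ↔ (y : ℕ → Option A₁) i = none)

/-- A conjugacy of OTW subshifts: a homeomorphism commuting with the shifts and
preserving lengths. -/
def IsConjugacy (F₁ : Set (List A₁)) (F₂ : Set (List A₂))
    (h : ↥(OTW F₁) ≃ₜ ↥(OTW F₂)) : Prop :=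
  ShiftCommuting F₁ F₂ ⇑h ∧ LengthPreserving F₁ F₂ ⇑h

/-- The image `h̄(S) = h(S)` of a subset `S ⊆ X₁` under (the restriction to `X₁` of)
a map `h : X₁^OTW → X₂^OTW`. -/
def hbar (F₁ : Set (List A₁)) (F₂ : Set (List A₂))
    (h : ↥(OTW F₁) → ↥(OTW F₂)) (S : Set (ℕ → A₁)) : Set (ℕ → A₂) :=
  {z | ∃ y : ↥(OTW F₁), (y : ℕ → Option A₁) ∈ ofSeq '' S ∧
    ofSeq z = (h y : ℕ → Option A₂)}

end Conjugacy

section PhiHatAux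

variable {A : Type*}

theorem wcat_lt' (w : List A) (x : ℕ → A) {n : ℕ} (h : n < w.length) :
    wcat w x n = w[n] := dif_pos h

theorem wcat_ge' (w : List A) (x : ℕ → A) {n : ℕ} (h : w.length ≤ n) :
    wcat w x n = x (n - w.length) := dif_neg (by omega)

theorem wcat_nil (x : ℕ → A) : wcat ([] : List A) x = x := by
  funext n; simp [wcat]

theorem wcat_inj {w : List A} {x y : ℕ → A} (h : wcat w x = wcat w y) : x = y := by
  funext n
  have := congrFun h (w.length + n)
  rwa [wcat_ge' w x (by omega), wcat_ge' w y (by omega),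
    Nat.add_sub_cancel_left] at this

theorem wcat_append (u v : List A) (x : ℕ → A) :
    wcat (u ++ v) x = wcat u (wcat v x) := by
  funext n
  rcases lt_or_ge n u.length with h | h
  · rw [wcat_lt' u _ h, wcat_lt' _ _ (by simp; omega)]
    exact List.getElem_append_left h
  · rw [wcat_ge' u _ h]
    rcases lt_or_ge n (u.length + v.length) with h2 | h2
    · rw [wcat_lt' _ _ (by simp; omega), wcat_lt' v _ (by omega)]
      rw [List.getElem_append_right (by omega)]
    · rw [wcat_ge' _ _ (by simp; omega), wcat_ge' v _ (by omega)]
      congr 1; simp; omega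

theorem wcat_mem_subshift {F : Set (List A)} {w : List A} {x : ℕ → A}
    (h : wcat w x ∈ SubshiftOf F) : x ∈ SubshiftOf F := by
  intro u hu i hblk
  apply h u hu (w.length + i)
  intro j hj
  rw [show w.length + i + j = w.length + (i + j) by omega,
    wcat_ge' w x (by omega), Nat.add_sub_cancel_left]
  exact hblk j hj

theorem wcat_mem_lang {F : Set (List A)} {w : List A} {x : ℕ → A}
    (h : wcat w x ∈ SubshiftOf F) : w ∈ Lang F :=
  ⟨wcat w x, h, 0, fun j hj => by
    rw [Nat.zero_add]; exact wcat_lt' w x hj⟩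

theorem nil_mem_lang {F : Set (List A)} {w : List A} (h : w ∈ Lang F) :
    ([] : List A) ∈ Lang F := by
  obtain ⟨x, hx, _, _⟩ := h
  exact ⟨x, hx, 0, fun j hj => by simp at hj⟩

theorem InU_subset {F : Set (List A)} {S : Set (ℕ → A)} (h : InU F S) :
    S ⊆ SubshiftOf F := by
  induction h with
  | base hα hβ => rintro z ⟨x, rfl, hx, _⟩; exact hx
  | union _ _ ih1 ih2 => exact Set.union_subset ih1 ih2
  | inter _ _ ih1 ih2 => exact Set.inter_subset_left.trans ih1
  | compl _ _ => exact Set.diff_subset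

theorem Cset_nil_nil {F : Set (List A)} : Cset F ([] : List A) [] = SubshiftOf F := by
  ext z
  constructor
  · rintro ⟨x, rfl, hx, _⟩; exact hx
  · intro hz; exact ⟨z, (wcat_nil z).symm, by rwa [wcat_nil], by rwa [wcat_nil]⟩

theorem InU_empty {F : Set (List A)} (h : ([] : List A) ∈ Lang F) :
    InU F (∅ : Set (ℕ → A)) := by
  have h1 := InU.compl (InU.base h h : InU F (Cset F ([] : List A) []))
  rwa [Cset_nil_nil, Set.diff_self] at h1

theorem prefix_of_wcat_eq {β δ : List A} {x y : ℕ → A} (h : wcat β x = wcat δ y)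
    (hle : β.length ≤ δ.length) : ∃ τ : List A, δ = β ++ τ := by
  refine ⟨δ.drop β.length, ?_⟩
  conv_lhs => rw [← List.take_append_drop β.length δ]
  congr 1
  apply List.ext_getElem (by simp [hle])
  intro i h1 h2
  have h1' : i < β.length := by simpa [hle] using h1
  have hc := congrFun h i
  rw [wcat_lt' β x h1', wcat_lt' δ y (by omega)] at hc
  simp [List.getElem_take, hc]

/-- `Φ_{αβ⁻¹}(B ∩ C(α,β)) = {αx : αx ∈ X, βx ∈ X, βx ∈ B}`. -/
def PhiC (F : Set (List A)) (α β : List A) (B : Set (ℕ → A)) : Set (ℕ → A) :=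
  {z | ∃ x : ℕ → A, z = wcat α x ∧ wcat α x ∈ SubshiftOf F ∧
    wcat β x ∈ SubshiftOf F ∧ wcat β x ∈ B}

theorem PhiC_union (F : Set (List A)) (α β : List A) (S T : Set (ℕ → A)) :
    PhiC F α β (S ∪ T) = PhiC F α β S ∪ PhiC F α β T := by
  ext z
  constructor
  · rintro ⟨x, rfl, h1, h2, h3 | h3⟩
    · exact Or.inl ⟨x, rfl, h1, h2, h3⟩
    · exact Or.inr ⟨x, rfl, h1, h2, h3⟩
  · rintro (⟨x, rfl, h1, h2, h3⟩ | ⟨x, rfl, h1, h2, h3⟩)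
    · exact ⟨x, rfl, h1, h2, Or.inl h3⟩
    · exact ⟨x, rfl, h1, h2, Or.inr h3⟩

theorem PhiC_inter (F : Set (List A)) (α β : List A) (S T : Set (ℕ → A)) :
    PhiC F α β (S ∩ T) = PhiC F α β S ∩ PhiC F α β T := by
  ext z
  constructor
  · rintro ⟨x, rfl, h1, h2, h3, h4⟩
    exact ⟨⟨x, rfl, h1, h2, h3⟩, ⟨x, rfl, h1, h2, h4⟩⟩
  · rintro ⟨⟨x, rfl, h1, h2, h3⟩, ⟨x', heq, h1', h2', h4⟩⟩
    cases wcat_inj heq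
    exact ⟨x, rfl, h1, h2, h3, h4⟩

theorem PhiC_compl (F : Set (List A)) (α β : List A) (S : Set (ℕ → A)) :
    PhiC F α β (SubshiftOf F \ S) = Cset F β α ∩ (SubshiftOf F \ PhiC F α β S) := by
  ext z
  constructor
  · rintro ⟨x, rfl, h1, h2, h3, h4⟩
    refine ⟨⟨x, rfl, h1, h2⟩, h1, ?_⟩
    rintro ⟨x', heq, _, _, h5⟩
    cases wcat_inj heq
    exact h4 h5
  · rintro ⟨⟨x, rfl, h1, h2⟩, _, hnot⟩
    exact ⟨x, rfl, h1, h2, h2, fun h5 => hnot ⟨x, rfl, h1, h2, h5⟩⟩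

theorem InU_PhiC {F : Set (List A)} {α β : List A} (hα : α ∈ Lang F) (hβ : β ∈ Lang F)
    {B : Set (ℕ → A)} (hB : InU F B) : InU F (PhiC F α β B) := by
  induction hB with
  | @base γ δ hγ hδ =>
    by_cases h1 : ∃ τ : List A, δ = β ++ τ
    · obtain ⟨τ, rfl⟩ := h1
      by_cases hne : (PhiC F α β (Cset F γ (β ++ τ))).Nonempty
      · obtain ⟨z, x, rfl, hαx, hβx, y, heq, hδy, hγy⟩ := hne
        have hx : x = wcat τ y := wcat_inj (by rw [heq, wcat_append])
        have hατ : (α ++ τ) ∈ Lang F :=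
          wcat_mem_lang (x := y) (by rw [wcat_append, ← hx]; exact hαx)
        have hβτ : (β ++ τ) ∈ Lang F := wcat_mem_lang hδy
        have hEq : PhiC F α β (Cset F γ (β ++ τ))
            = Cset F (β ++ τ) (α ++ τ) ∩ Cset F γ (α ++ τ) := by
          ext z
          constructor
          · rintro ⟨x, rfl, hαx, hβx, y, heq, hδy, hγy⟩
            have hx : x = wcat τ y := wcat_inj (by rw [heq, wcat_append])
            constructor
            · exact ⟨y, by rw [wcat_append, ← hx], by rw [wcat_append, ← hx]; exact hαx, hδy⟩
            · exact ⟨y, by rw [wcat_append, ← hx], by rw [wcat_append, ← hx]; exact hαx, hγy⟩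
          · rintro ⟨⟨y, rfl, ha, hb⟩, ⟨y', heq, ha', hc⟩⟩
            cases wcat_inj heq
            refine ⟨wcat τ y, by rw [wcat_append], by rw [← wcat_append]; exact ha,
              by rw [← wcat_append]; exact hb, y, by rw [wcat_append], hb, hc⟩
        rw [hEq]
        exact InU.inter (InU.base hβτ hατ) (InU.base hγ hατ)
      · rw [Set.not_nonempty_iff_eq_empty.mp hne]
        exact InU_empty (nil_mem_lang hα)
    · by_cases h2 : ∃ τ : List A, β = δ ++ τ
      · obtain ⟨τ, rfl⟩ := h2
        by_cases hne : (PhiC F α (δ ++ τ) (Cset F γ δ)).Nonempty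
        · obtain ⟨z, x, rfl, hαx, hβx, y, heq, hδy, hγy⟩ := hne
          have hy : y = wcat τ x := wcat_inj (by rw [← heq, wcat_append])
          have hγτ : (γ ++ τ) ∈ Lang F :=
            wcat_mem_lang (x := x) (by rw [wcat_append, ← hy]; exact hγy)
          have hEq : PhiC F α (δ ++ τ) (Cset F γ δ)
              = Cset F (δ ++ τ) α ∩ Cset F (γ ++ τ) α := by
            ext z
            constructor
            · rintro ⟨x, rfl, hαx, hβx, y, heq, hδy, hγy⟩
              have hy : y = wcat τ x := wcat_inj (by rw [← heq, wcat_append])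
              refine ⟨⟨x, rfl, hαx, hβx⟩, ⟨x, rfl, hαx, ?_⟩⟩
              rw [wcat_append, ← hy]; exact hγy
            · rintro ⟨⟨x, rfl, hαx, hβx⟩, ⟨x', heq, _, hγτx⟩⟩
              cases wcat_inj heq
              refine ⟨x, rfl, hαx, hβx, wcat τ x, by rw [wcat_append], ?_, ?_⟩
              · rw [← wcat_append]; exact hβx
              · rw [← wcat_append]; exact hγτx
          rw [hEq]
          exact InU.inter (InU.base hβ hα) (InU.base hγτ hα)
        · rw [Set.not_nonempty_iff_eq_empty.mp hne]
          exact InU_empty (nil_mem_lang hα)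
      · have hEq : PhiC F α β (Cset F γ δ) = ∅ := by
          ext z
          simp only [Set.mem_empty_iff_false, iff_false]
          rintro ⟨x, rfl, hαx, hβx, y, heq, hδy, hγy⟩
          rcases le_total β.length δ.length with hle | hle
          · exact h1 (prefix_of_wcat_eq heq hle)
          · exact h2 (prefix_of_wcat_eq heq.symm hle)
        rw [hEq]
        exact InU_empty (nil_mem_lang hα)
  | union h1 h2 ih1 ih2 => rw [PhiC_union]; exact InU.union ih1 ih2
  | inter h1 h2 ih1 ih2 => rw [PhiC_inter]; exact InU.inter ih1 ih2
  | compl h1 ih => rw [PhiC_compl]; exact InU.inter (InU.base hβ hα) (InU.compl ih)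

/-- The sets of the ultrafilter `φ̂_{αβ⁻¹}(ξ)`. -/
def phiSets (F : Set (List A)) (α β : List A) (ξ : UltraU F) : Set (Set (ℕ → A)) :=
  {S : Set (ℕ → A) | InU F S ∧
    ∃ B ∈ ξ.sets, relRange F B β ⊆ relRange F S α}

theorem mem_phiSets_iff {F : Set (List A)} {α β : List A}
    (hα : α ∈ Lang F) (hβ : β ∈ Lang F) {ξ : UltraU F}
    (hξ : Cset F α β ∈ ξ.sets) {S : Set (ℕ → A)} (hS : InU F S) :
    S ∈ phiSets F α β ξ ↔ PhiC F β α S ∈ ξ.sets := by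
  constructor
  · rintro ⟨-, B, hB, hr⟩
    apply ξ.superset_mem (B ∩ Cset F α β) (ξ.inter_mem B hB _ hξ) _
      (InU_PhiC hβ hα hS)
    rintro z ⟨hzB, x, rfl, hβx, hαx⟩
    have hx := wcat_mem_subshift hβx
    exact ⟨x, rfl, hβx, hαx, (hr ⟨hx, hzB⟩).2⟩
  · intro h
    refine ⟨hS, PhiC F β α S, h, ?_⟩
    rintro x ⟨hxX, x', heq, hβ', hα', hS'⟩
    cases wcat_inj heq
    exact ⟨hxX, hS'⟩

theorem Cset_mem_phiSets {F : Set (List A)} {α β : List A}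
    (hα : α ∈ Lang F) (hβ : β ∈ Lang F) {ξ : UltraU F}
    (hξ : Cset F α β ∈ ξ.sets) : Cset F β α ∈ phiSets F α β ξ := by
  refine ⟨InU.base hβ hα, Cset F α β, hξ, ?_⟩
  rintro x ⟨hxX, x', heq, hβ', hα'⟩
  cases wcat_inj heq
  exact ⟨hxX, x, rfl, hα', hβ'⟩

/-- The ultrafilter `φ̂_{αβ⁻¹}(ξ)`. -/
def phiU (F : Set (List A)) (α β : List A) (hα : α ∈ Lang F) (hβ : β ∈ Lang F)
    (ξ : UltraU F) (hξ : Cset F α β ∈ ξ.sets) : UltraU F where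
  sets := phiSets F α β ξ
  mem_inU S hS := hS.1
  nonempty := ⟨Cset F β α, Cset_mem_phiSets hα hβ hξ⟩
  empty_not_mem := by
    rintro ⟨-, B, hB, hr⟩
    have h2 : B ∩ Cset F α β ∈ ξ.sets := ξ.inter_mem B hB _ hξ
    have h3 : B ∩ Cset F α β = ∅ := by
      apply Set.eq_empty_of_subset_empty
      rintro z ⟨hzB, x, rfl, hβx, hαx⟩
      exact ((hr ⟨wcat_mem_subshift hβx, hzB⟩).2 : wcat α x ∈ (∅ : Set (ℕ → A)))
    exact ξ.empty_not_mem (h3 ▸ h2)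
  inter_mem := by
    rintro S ⟨hS, B1, h1, r1⟩ T ⟨hT, B2, h2, r2⟩
    refine ⟨InU.inter hS hT, B1 ∩ B2, ξ.inter_mem B1 h1 B2 h2, ?_⟩
    rintro x ⟨hxX, hm1, hm2⟩
    exact ⟨hxX, (r1 ⟨hxX, hm1⟩).2, (r2 ⟨hxX, hm2⟩).2⟩
  superset_mem := by
    rintro S ⟨hS, B, hB, hr⟩ T hT hsub
    exact ⟨hT, B, hB, fun x hx => ⟨(hr hx).1, hsub (hr hx).2⟩⟩
  prime := by
    intro S T hS hT hST
    obtain ⟨-, B, hB, hr⟩ := hST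
    have hsub : B ∩ Cset F α β ⊆ PhiC F β α S ∪ PhiC F β α T := by
      rintro z ⟨hzB, x, rfl, hβx, hαx⟩
      have hx := wcat_mem_subshift hβx
      rcases (hr ⟨hx, hzB⟩).2 with h | h
      · exact Or.inl ⟨x, rfl, hβx, hαx, h⟩
      · exact Or.inr ⟨x, rfl, hβx, hαx, h⟩
    have hU : PhiC F β α S ∪ PhiC F β α T ∈ ξ.sets :=
      ξ.superset_mem _ (ξ.inter_mem B hB _ hξ) _
        (InU.union (InU_PhiC hβ hα hS) (InU_PhiC hβ hα hT)) hsub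
    rcases ξ.prime _ _ (InU_PhiC hβ hα hS) (InU_PhiC hβ hα hT) hU with h | h
    · exact Or.inl ((mem_phiSets_iff hα hβ hξ hS).mpr h)
    · exact Or.inr ((mem_phiSets_iff hα hβ hξ hT).mpr h)

theorem UltraU.ext' {F : Set (List A)} {ξ η : UltraU F} (h : ξ.sets = η.sets) :
    ξ = η := by
  cases ξ; cases η; cases h; rfl

theorem phiU_phiU {F : Set (List A)} {α β : List A} (hα : α ∈ Lang F)
    (hβ : β ∈ Lang F) (ξ : UltraU F) (hξ : Cset F α β ∈ ξ.sets)
    (h2 : Cset F β α ∈ (phiU F α β hα hβ ξ hξ).sets) :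
    phiU F β α hβ hα (phiU F α β hα hβ ξ hξ) h2 = ξ := by
  apply UltraU.ext'
  ext S
  constructor
  · rintro ⟨hS, B, ⟨hBInU, B₀, hB₀, hr₀⟩, hr⟩
    apply ξ.superset_mem (B₀ ∩ Cset F α β) (ξ.inter_mem B₀ hB₀ _ hξ) S hS
    rintro z ⟨hz, x, rfl, hβx, hαx⟩
    have hx := wcat_mem_subshift hβx
    exact (hr (hr₀ ⟨hx, hz⟩)).2
  · intro hSξ
    have hSInU := ξ.mem_inU S hSξ
    refine ⟨hSInU, PhiC F α β S, ?_, ?_⟩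
    · refine ⟨InU_PhiC hα hβ hSInU, S ∩ Cset F α β, ξ.inter_mem S hSξ _ hξ, ?_⟩
      rintro x ⟨hxX, hmS, x', heq, hβ', hα'⟩
      cases wcat_inj heq
      exact ⟨hxX, x, rfl, hα', hβ', hmS⟩
    · rintro x ⟨hxX, x', heq, hα', hβ', hS'⟩
      cases wcat_inj heq
      exact ⟨hxX, hS'⟩

end PhiHatAux
theorem isOpen_Oset {A : Type*} {F : Set (List A)} {S : Set (ℕ → A)} (hS : InU F S) :
    IsOpen (Oset F S) :=
  TopologicalSpace.isOpen_generateFrom_of_mem (g := {V | ∃ S : Set (ℕ → A), InU F S ∧ V = Oset F S})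
    ⟨S, hS, rfl⟩

theorem continuous_phiU {A : Type*} (F : Set (List A)) (α β : List A)
    (hα : α ∈ Lang F) (hβ : β ∈ Lang F) :
    Continuous (fun ξ : ↥(Oset F (Cset F α β)) =>
      (phiU F α β hα hβ ξ.1 ξ.2 : UltraU F)) := by
  apply continuous_generateFrom_iff.mpr
  rintro V ⟨S, hS, rfl⟩
  have hpre : (fun ξ : ↥(Oset F (Cset F α β)) => phiU F α β hα hβ ξ.1 ξ.2) ⁻¹' Oset F S
      = Subtype.val ⁻¹' Oset F (PhiC F β α S) := by
    ext ξ
    exact mem_phiSets_iff hα hβ ξ.2 hS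
  rw [hpre]
  exact (isOpen_Oset (InU_PhiC hβ hα hS)).preimage continuous_subtype_val

theorem phiHat_word_homeomorphism {A : Type*} (F : Set (List A)) (α β : List A)
    (hα : α ∈ Lang F) (hβ : β ∈ Lang F) (hred : ReducedPair α β) :
    ∃ g : ↥(Oset F (Cset F α β)) ≃ₜ ↥(Oset F (Cset F β α)),
      ∀ ξ : ↥(Oset F (Cset F α β)),
        (↑(g ξ) : UltraU F).sets
          = {S : Set (ℕ → A) | InU F S ∧
              ∃ B ∈ (↑ξ : UltraU F).sets, relRange F B β ⊆ relRange F S α} := by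
  refine ⟨Homeomorph.mk
    { toFun := fun ξ => ⟨phiU F α β hα hβ ξ.1 ξ.2, Cset_mem_phiSets hα hβ ξ.2⟩
      invFun := fun η => ⟨phiU F β α hβ hα η.1 η.2, Cset_mem_phiSets hβ hα η.2⟩
      left_inv := fun ξ => Subtype.ext (phiU_phiU hα hβ ξ.1 ξ.2 (Cset_mem_phiSets hα hβ ξ.2))
      right_inv := fun η => Subtype.ext (phiU_phiU hβ hα η.1 η.2 (Cset_mem_phiSets hβ hα η.2)) }
    ((continuous_phiU F α β hα hβ).subtype_mk _)
    ((continuous_phiU F β α hβ hα).subtype_mk _), fun ξ => rfl⟩
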